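/- arXiv:2109.14752 — 2 statements merged into one kernel-verified Lean document; each statement's English description precedes it below -/
import Mathlib

section
/- (Theorem 1(b)) Let δ ∈ (0,1/2) and let μ_j = δ μ_{j,F} + (1−δ) μ_{j,B} ∈ P_δ for j = 1,2. Suppose η > 0 is such that φ_F(3(1−δ)η/δ) < 1 and ψ(3(1−δ)η/δ, η) > 0. Then μ_{1,F} ≠ μ_{2,F}, and for every α ∈ (0,1) with 1 − ψ(3(1−δ)η/δ, η) ≤ α, one has kdiff(μ1,μ2;α) ≥ 2(1−δ)η. -/
open MeasureTheory Set

/-- CDF of `|f|` with respect to `ν`: `Λ(f)(t) = ν{z : |f(z)| < t}`. -/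
noncomputable def Lambda {X : Type*} [MeasurableSpace X] (ν : Measure X) (f : X → ℝ) (t : ℝ) : ℝ :=
  (ν {z | |f z| < t}).toReal

/-- Inverse CDF: `f#(u) = sup {t : Λ(f)(t) ≤ u}`. -/
noncomputable def invCDF {X : Type*} [MeasurableSpace X] (ν : Measure X) (f : X → ℝ) (u : ℝ) : ℝ :=
  sSup {t : ℝ | Lambda ν f t ≤ u}

/-- Witness function of the signed measure `μ₁ - μ₂`:
`U(μ₁-μ₂)(z) = ∫ K(z,x) dμ₁(x) - ∫ K(z,x) dμ₂(x)`. -/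
noncomputable def witness {X : Type*} [MeasurableSpace X] (K : X → X → ℝ)
    (μ₁ μ₂ : Measure X) (z : X) : ℝ :=
  (∫ x, K z x ∂μ₁) - ∫ x, K z x ∂μ₂

/-- `kdiff(μ₁,μ₂;α) = (T(μ₁-μ₂))#(α)` where `T(μ₁-μ₂) = |U(μ₁-μ₂)|`. -/
noncomputable def kdiff {X : Type*} [MeasurableSpace X] (ν : Measure X) (K : X → X → ℝ)
    (μ₁ μ₂ : Measure X) (α : ℝ) : ℝ :=
  invCDF ν (fun z => |witness K μ₁ μ₂ z|) α

/-- Mixture `δ μF + (1-δ) μB`. -/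
noncomputable def mix {X : Type*} [MeasurableSpace X] (δ : ℝ) (μF μB : Measure X) : Measure X :=
  ENNReal.ofReal δ • μF + ENNReal.ofReal (1 - δ) • μB

/-- `S(η) = {z : T(μ₁-μ₂)(z) < η}`. -/
def Sset {X : Type*} [MeasurableSpace X] (K : X → X → ℝ) (μ₁ μ₂ : Measure X) (η : ℝ) : Set X :=
  {z | |witness K μ₁ μ₂ z| < η}

/-- `G(θ,η) = (S_F(θ)ᶜ ∩ S_B(η)) ∪ (S_B(θ)ᶜ ∩ S_F(η))`. -/
def Gset {X : Type*} [MeasurableSpace X] (K : X → X → ℝ)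
    (μ1F μ2F μ1B μ2B : Measure X) (θ η : ℝ) : Set X :=
  ((Sset K μ1F μ2F θ)ᶜ ∩ Sset K μ1B μ2B η) ∪ ((Sset K μ1B μ2B θ)ᶜ ∩ Sset K μ1F μ2F η)

section Aux

variable {X : Type*} [MeasurableSpace X] {K : X → X → ℝ}

lemma K_integrable (hKmeas : Measurable (Function.uncurry K))
    {C : ℝ} (hKbd : ∀ x y, |K x y| ≤ C) (μ : Measure X) [IsProbabilityMeasure μ] (z : X) :
    Integrable (fun x => K z x) μ := by
  have hm : Measurable fun x => K z x := hKmeas.comp measurable_prodMk_left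
  exact (integrable_const C).mono' hm.aestronglyMeasurable
    (Filter.Eventually.of_forall fun x => by simpa [Real.norm_eq_abs] using hKbd z x)

lemma witness_meas (hKmeas : Measurable (Function.uncurry K))
    (μ1 μ2 : Measure X) [SFinite μ1] [SFinite μ2] :
    Measurable (witness K μ1 μ2) := by
  have h1 : StronglyMeasurable fun z => ∫ x, K z x ∂μ1 :=
    hKmeas.stronglyMeasurable.integral_prod_right'
  have h2 : StronglyMeasurable fun z => ∫ x, K z x ∂μ2 :=
    hKmeas.stronglyMeasurable.integral_prod_right'
  exact h1.measurable.sub h2.measurable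

lemma witness_abs_le (hKmeas : Measurable (Function.uncurry K))
    {C : ℝ} (hKbd : ∀ x y, |K x y| ≤ C)
    (μ1 μ2 : Measure X) [IsProbabilityMeasure μ1] [IsProbabilityMeasure μ2] (z : X) :
    |witness K μ1 μ2 z| ≤ 2 * C := by
  have hb1 : ∀ᵐ x ∂μ1, ‖K z x‖ ≤ C :=
    Filter.Eventually.of_forall fun x => by rw [Real.norm_eq_abs]; exact hKbd z x
  have hb2 : ∀ᵐ x ∂μ2, ‖K z x‖ ≤ C :=
    Filter.Eventually.of_forall fun x => by rw [Real.norm_eq_abs]; exact hKbd z x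
  have h1 := norm_integral_le_of_norm_le_const (f := fun x => K z x) hb1
  have h2 := norm_integral_le_of_norm_le_const (f := fun x => K z x) hb2
  simp [Real.norm_eq_abs] at h1 h2
  calc |witness K μ1 μ2 z| ≤ |∫ x, K z x ∂μ1| + |∫ x, K z x ∂μ2| := abs_sub _ _
    _ ≤ 2 * C := by linarith

lemma integral_mix {δ : ℝ} (hδ0 : 0 ≤ δ) (hδ1 : δ ≤ 1)
    (μF μB : Measure X) (f : X → ℝ)
    (hF : Integrable f μF) (hB : Integrable f μB) :
    ∫ x, f x ∂(mix δ μF μB) = δ * ∫ x, f x ∂μF + (1 - δ) * ∫ x, f x ∂μB := by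
  have h1 : Integrable f (ENNReal.ofReal δ • μF) := hF.smul_measure ENNReal.ofReal_ne_top
  have h2 : Integrable f (ENNReal.ofReal (1 - δ) • μB) := hB.smul_measure ENNReal.ofReal_ne_top
  rw [mix, integral_add_measure h1 h2, integral_smul_measure, integral_smul_measure,
    ENNReal.toReal_ofReal hδ0, ENNReal.toReal_ofReal (by linarith)]
  simp [smul_eq_mul]

lemma witness_mix (hKmeas : Measurable (Function.uncurry K))
    {C : ℝ} (hKbd : ∀ x y, |K x y| ≤ C) {δ : ℝ} (hδ0 : 0 ≤ δ) (hδ1 : δ ≤ 1)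
    (μ1F μ1B μ2F μ2B : Measure X)
    [IsProbabilityMeasure μ1F] [IsProbabilityMeasure μ1B]
    [IsProbabilityMeasure μ2F] [IsProbabilityMeasure μ2B] (z : X) :
    witness K (mix δ μ1F μ1B) (mix δ μ2F μ2B) z
      = δ * witness K μ1F μ2F z + (1 - δ) * witness K μ1B μ2B z := by
  unfold witness
  rw [integral_mix hδ0 hδ1 _ _ _ (K_integrable hKmeas hKbd μ1F z) (K_integrable hKmeas hKbd μ1B z),
    integral_mix hδ0 hδ1 _ _ _ (K_integrable hKmeas hKbd μ2F z) (K_integrable hKmeas hKbd μ2B z)]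
  ring

end Aux

/-- Theorem 1(b): if `φ_F(3(1-δ)η/δ) < 1` and `ψ(3(1-δ)η/δ, η) > 0`, then
`μ_{1,F} ≠ μ_{2,F}` and for any `α` with `1 - ψ(3(1-δ)η/δ, η) ≤ α`,
`kdiff(μ₁,μ₂;α) ≥ 2(1-δ)η`. -/
theorem stmt5 {X : Type*} [MetricSpace X] [MeasurableSpace X] [BorelSpace X]
    (ν : Measure X) [IsProbabilityMeasure ν]
    (K : X → X → ℝ) (hKmeas : Measurable (Function.uncurry K))
    (hKbd : ∃ C : ℝ, ∀ x y, |K x y| ≤ C)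
    (δ : ℝ) (hδ : δ ∈ Ioo (0 : ℝ) (1 / 2))
    (μ1F μ1B μ2F μ2B : Measure X)
    [IsProbabilityMeasure μ1F] [IsProbabilityMeasure μ1B]
    [IsProbabilityMeasure μ2F] [IsProbabilityMeasure μ2B]
    (η : ℝ) (hη : 0 < η)
    (hφF : (ν (Sset K μ1F μ2F (3 * (1 - δ) / δ * η))).toReal < 1)
    (hψ : 0 < (ν (Gset K μ1F μ2F μ1B μ2B (3 * (1 - δ) / δ * η) η)).toReal) :
    μ1F ≠ μ2F ∧
      ∀ α : ℝ, α ∈ Ioo (0 : ℝ) 1 →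
        1 - (ν (Gset K μ1F μ2F μ1B μ2B (3 * (1 - δ) / δ * η) η)).toReal ≤ α →
        2 * (1 - δ) * η ≤ kdiff ν K (mix δ μ1F μ1B) (mix δ μ2F μ2B) α := by
  obtain ⟨hδ0, hδhalf⟩ := hδ
  obtain ⟨C, hC⟩ := hKbd
  set C' : ℝ := max C 0 with hC'def
  have hC' : ∀ x y, |K x y| ≤ C' := fun x y => le_trans (hC x y) (le_max_left _ _)
  have hC'0 : 0 ≤ C' := le_max_right _ _
  have hδ1 : δ ≤ 1 := by linarith
  set θ : ℝ := 3 * (1 - δ) / δ * η with hθdef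
  have hθpos : 0 < θ := by
    apply mul_pos _ hη
    apply div_pos (by linarith) hδ0
  have hδθ : δ * θ = 3 * (1 - δ) * η := by
    rw [hθdef]; field_simp
  -- part 1
  have hne : μ1F ≠ μ2F := by
    intro h
    rw [← h] at hφF
    have hw : ∀ z, witness K μ1F μ1F z = 0 := fun z => sub_self _
    have : Sset K μ1F μ1F θ = Set.univ := by
      ext z; simp [Sset, hw z, hθpos]
    rw [this] at hφF
    simp at hφF
  refine ⟨hne, fun α hα hαψ => ?_⟩
  set U : X → ℝ := witness K (mix δ μ1F μ1B) (mix δ μ2F μ2B) with hUdef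
  have hUmix : ∀ z, U z = δ * witness K μ1F μ2F z + (1 - δ) * witness K μ1B μ2B z :=
    fun z => witness_mix hKmeas hC' hδ0.le hδ1 μ1F μ1B μ2F μ2B z
  -- pointwise bound on G
  have hGbound : ∀ z ∈ Gset K μ1F μ2F μ1B μ2B θ η, 2 * (1 - δ) * η ≤ |U z| := by
    intro z hz
    set a : ℝ := witness K μ1F μ2F z
    set b : ℝ := witness K μ1B μ2B z
    have hU : U z = δ * a + (1 - δ) * b := hUmix z
    have key1 : |δ * a| - |(1 - δ) * b| ≤ |δ * a + (1 - δ) * b| := by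
      have h := abs_sub_abs_le_abs_sub (δ * a) (-((1 - δ) * b))
      simpa [sub_neg_eq_add, abs_neg] using h
    have key2 : |(1 - δ) * b| - |δ * a| ≤ |δ * a + (1 - δ) * b| := by
      have h := abs_sub_abs_le_abs_sub ((1 - δ) * b) (-(δ * a))
      calc |(1 - δ) * b| - |δ * a|
          ≤ |(1 - δ) * b - -(δ * a)| := by simpa [abs_neg] using h
        _ = |δ * a + (1 - δ) * b| := by ring_nf
    have habsa : |δ * a| = δ * |a| := by
      rw [abs_mul, abs_of_pos hδ0]
    have habsb : |(1 - δ) * b| = (1 - δ) * |b| := by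
      rw [abs_mul, abs_of_pos (by linarith)]
    rw [hU]
    rcases hz with ⟨h1, h2⟩ | ⟨h1, h2⟩
    · -- θ ≤ |a|, |b| < η
      have ha : θ ≤ |a| := not_lt.mp h1
      have hb : |b| < η := h2
      have hda : δ * θ ≤ δ * |a| := by
        exact mul_le_mul_of_nonneg_left ha hδ0.le
      have hdb : (1 - δ) * |b| < (1 - δ) * η := by
        exact mul_lt_mul_of_pos_left hb (by linarith)
      linarith [key1, habsa, habsb, hδθ]
    · -- θ ≤ |b|, |a| < η
      have hb : θ ≤ |b| := not_lt.mp h1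
      have ha : |a| < η := h2
      have hdb : (1 - δ) * θ ≤ (1 - δ) * |b| := by
        exact mul_le_mul_of_nonneg_left hb (by linarith)
      have hda : δ * |a| < δ * η := mul_lt_mul_of_pos_left ha hδ0
      nlinarith [key2, habsa, habsb, hδθ, mul_pos hη (by linarith : (0:ℝ) < 1 - 2 * δ)]
  -- measurability of G
  have hSmeas : ∀ (μ1 μ2 : Measure X) [IsProbabilityMeasure μ1] [IsProbabilityMeasure μ2]
      (t : ℝ), MeasurableSet (Sset K μ1 μ2 t) := by
    intro μ1 μ2 _ _ t
    exact measurableSet_lt (witness_meas hKmeas μ1 μ2).abs measurable_const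
  have hGmeas : MeasurableSet (Gset K μ1F μ2F μ1B μ2B θ η) :=
    (((hSmeas μ1F μ2F θ).compl.inter (hSmeas μ1B μ2B η)).union
      ((hSmeas μ1B μ2B θ).compl.inter (hSmeas μ1F μ2F η)))
  set G := Gset K μ1F μ2F μ1B μ2B θ η with hGdef
  set t0 : ℝ := 2 * (1 - δ) * η with ht0def
  -- Lambda at t0 is at most 1 - ψ ≤ α
  have hsub : {z | |U z| < t0} ⊆ Gᶜ := by
    intro z hz hzG
    exact absurd (hGbound z hzG) (not_le.mpr hz)
  have hmemLam : Lambda ν (fun z => |U z|) t0 ≤ α := by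
    have h1 : ν {z | |U z| < t0} ≤ ν Gᶜ := measure_mono hsub
    have h2 : ν Gᶜ = 1 - ν G := prob_compl_eq_one_sub hGmeas
    have h3 : (ν Gᶜ).toReal = 1 - (ν G).toReal := by
      rw [h2, ENNReal.toReal_sub_of_le prob_le_one ENNReal.one_ne_top]
      simp
    have h4 : (ν {z | |U z| < t0}).toReal ≤ (ν Gᶜ).toReal :=
      ENNReal.toReal_mono (measure_ne_top ν _) h1
    have h5 : Lambda ν (fun z => |U z|) t0 = (ν {z | |U z| < t0}).toReal := by
      unfold Lambda
      congr 1
      apply congrArg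
      ext z
      simp [abs_abs]
    rw [h5]
    calc (ν {z | |U z| < t0}).toReal ≤ (ν Gᶜ).toReal := h4
      _ = 1 - (ν G).toReal := h3
      _ ≤ α := hαψ
  -- the set whose sup we take is bounded above by 2*C'
  have hbdd : BddAbove {t : ℝ | Lambda ν (fun z => |U z|) t ≤ α} := by
    refine ⟨2 * C', fun t ht => ?_⟩
    by_contra hlt
    push_neg at hlt
    have hset : {z | |U z| < t} = Set.univ := by
      ext z
      simp only [Set.mem_setOf_eq, Set.mem_univ, iff_true]
      have h1 : |witness K μ1F μ2F z| ≤ 2 * C' := witness_abs_le hKmeas hC' μ1F μ2F z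
      have h2 : |witness K μ1B μ2B z| ≤ 2 * C' := witness_abs_le hKmeas hC' μ1B μ2B z
      have : |U z| ≤ 2 * C' := by
        rw [hUmix z]
        calc |δ * witness K μ1F μ2F z + (1 - δ) * witness K μ1B μ2B z|
            ≤ |δ * witness K μ1F μ2F z| + |(1 - δ) * witness K μ1B μ2B z| := abs_add_le _ _
          _ = δ * |witness K μ1F μ2F z| + (1 - δ) * |witness K μ1B μ2B z| := by
              rw [abs_mul, abs_mul, abs_of_pos hδ0, abs_of_pos (by linarith : (0:ℝ) < 1 - δ)]
          _ ≤ δ * (2 * C') + (1 - δ) * (2 * C') := by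
              apply add_le_add
              · exact mul_le_mul_of_nonneg_left h1 hδ0.le
              · exact mul_le_mul_of_nonneg_left h2 (by linarith)
          _ = 2 * C' := by ring
      linarith
    have : Lambda ν (fun z => |U z|) t = 1 := by
      unfold Lambda
      simp only [abs_abs]
      rw [hset]
      simp
    have ht' : Lambda ν (fun z => |U z|) t ≤ α := ht
    rw [this] at ht'
    linarith [hα.2]
  -- conclude
  have hmem : t0 ∈ {t : ℝ | Lambda ν (fun z => |U z|) t ≤ α} := hmemLam
  have : t0 ≤ sSup {t : ℝ | Lambda ν (fun z => |U z|) t ≤ α} := le_csSup hbdd hmem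
  unfold kdiff invCDF
  exact this
end

section
/- Let δ ∈ (0,1/2), η > 0, and set θ = 3(1−δ)η/δ. Let μ_j = δ μ_{j,F} + (1−δ) μ_{j,B} ∈ P_δ for j = 1,2. Then {z ∈ X : T(μ1 − μ2)(z) < 2(1−δ)η} ⊆ X \ G(θ,η), and consequently Λ(T(μ1 − μ2))(2(1−δ)η) ≤ 1 − ψ(θ,η). -/
open MeasureTheory Set

/-- with `θ = 3(1-δ)η/δ`,
`{z : T(μ₁-μ₂)(z) < 2(1-δ)η} ⊆ X \ G(θ,η)`, and consequently
`Λ(T(μ₁-μ₂))(2(1-δ)η) ≤ 1 - ψ(θ,η)`. -/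
theorem stmt9 {X : Type*} [MetricSpace X] [MeasurableSpace X] [BorelSpace X]
    (ν : Measure X) [IsProbabilityMeasure ν]
    (K : X → X → ℝ) (hKmeas : Measurable (Function.uncurry K))
    (hKbd : ∃ C : ℝ, ∀ x y, |K x y| ≤ C)
    (δ : ℝ) (hδ : δ ∈ Ioo (0 : ℝ) (1 / 2))
    (η : ℝ) (hη : 0 < η)
    (μ1F μ1B μ2F μ2B : Measure X)
    [IsProbabilityMeasure μ1F] [IsProbabilityMeasure μ1B]
    [IsProbabilityMeasure μ2F] [IsProbabilityMeasure μ2B] :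
    {z | |witness K (mix δ μ1F μ1B) (mix δ μ2F μ2B) z| < 2 * (1 - δ) * η} ⊆
        (Gset K μ1F μ2F μ1B μ2B (3 * (1 - δ) * η / δ) η)ᶜ ∧
      Lambda ν (fun z => |witness K (mix δ μ1F μ1B) (mix δ μ2F μ2B) z|) (2 * (1 - δ) * η) ≤
        1 - (ν (Gset K μ1F μ2F μ1B μ2B (3 * (1 - δ) * η / δ) η)).toReal := by
  obtain ⟨C, hC⟩ := hKbd
  obtain ⟨hδ0, hδh⟩ := hδ
  have hδ1 : δ < 1 := lt_trans hδh (by norm_num)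
  have h1δ : 0 < 1 - δ := by linarith
  have hint : ∀ (μ : Measure X) [IsProbabilityMeasure μ] (z : X), Integrable (K z) μ := by
    intro μ _ z
    refine (integrable_const C).mono' (hKmeas.of_uncurry_left).aestronglyMeasurable ?_
    exact ae_of_all _ fun x => by simpa [Real.norm_eq_abs] using hC z x
  have hwit : ∀ z, witness K (mix δ μ1F μ1B) (mix δ μ2F μ2B) z
      = δ * witness K μ1F μ2F z + (1 - δ) * witness K μ1B μ2B z := by
    intro z
    have h1 : ∀ (μF μB : Measure X) [IsProbabilityMeasure μF] [IsProbabilityMeasure μB],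
        ∫ x, K z x ∂(mix δ μF μB) = δ * ∫ x, K z x ∂μF + (1-δ) * ∫ x, K z x ∂μB := by
      intro μF μB _ _
      rw [mix, integral_add_measure ((hint μF z).smul_measure ENNReal.ofReal_ne_top)
        ((hint μB z).smul_measure ENNReal.ofReal_ne_top),
        integral_smul_measure, integral_smul_measure,
        ENNReal.toReal_ofReal hδ0.le, ENNReal.toReal_ofReal h1δ.le]
      simp [smul_eq_mul]
    rw [witness, h1, h1]
    unfold witness
    ring
  have hθδ : (3 * (1 - δ) * η / δ) * δ = 3 * (1 - δ) * η := by
    field_simp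
  have hsub : {z | |witness K (mix δ μ1F μ1B) (mix δ μ2F μ2B) z| < 2 * (1 - δ) * η} ⊆
      (Gset K μ1F μ2F μ1B μ2B (3 * (1 - δ) * η / δ) η)ᶜ := by
    intro z hz
    simp only [mem_setOf_eq, hwit z] at hz
    set a := witness K μ1F μ2F z with ha_def
    set b := witness K μ1B μ2B z with hb_def
    intro hG
    have key1 : δ * |a| ≤ |δ*a + (1-δ)*b| + (1-δ)*|b| := by
      have h := abs_add_le (δ*a + (1-δ)*b) (-((1-δ)*b))
      have he : (δ*a + (1-δ)*b) + -((1-δ)*b) = δ*a := by ring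
      rw [he, abs_neg, abs_mul (1-δ) b, abs_of_pos h1δ, abs_mul δ a, abs_of_pos hδ0] at h
      exact h
    have key2 : (1-δ) * |b| ≤ |δ*a + (1-δ)*b| + δ*|a| := by
      have h := abs_add_le (δ*a + (1-δ)*b) (-(δ*a))
      have he : (δ*a + (1-δ)*b) + -(δ*a) = (1-δ)*b := by ring
      rw [he, abs_neg, abs_mul (1-δ) b, abs_of_pos h1δ, abs_mul δ a, abs_of_pos hδ0] at h
      exact h
    rcases hG with ⟨ha, hb⟩ | ⟨hb, ha⟩
    · simp only [Sset, mem_compl_iff, mem_setOf_eq, not_lt, ← ha_def, ← hb_def] at ha hb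
      nlinarith [abs_nonneg a, abs_nonneg b]
    · simp only [Sset, mem_compl_iff, mem_setOf_eq, not_lt, ← ha_def, ← hb_def] at ha hb
      nlinarith [abs_nonneg a, abs_nonneg b]
  refine ⟨hsub, ?_⟩
  have hwmeas : ∀ (μ1 μ2 : Measure X) [IsProbabilityMeasure μ1] [IsProbabilityMeasure μ2],
      Measurable (witness K μ1 μ2) := by
    intro μ1 μ2 _ _
    have h1 : StronglyMeasurable (fun z => ∫ x, K z x ∂μ1) :=
      hKmeas.stronglyMeasurable.integral_prod_right'
    have h2 : StronglyMeasurable (fun z => ∫ x, K z x ∂μ2) :=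
      hKmeas.stronglyMeasurable.integral_prod_right'
    exact (h1.measurable.sub h2.measurable)
  have hSmeas : ∀ (μ1 μ2 : Measure X) [IsProbabilityMeasure μ1] [IsProbabilityMeasure μ2] (t : ℝ),
      MeasurableSet (Sset K μ1 μ2 t) := by
    intro μ1 μ2 _ _ t
    exact measurableSet_lt (hwmeas μ1 μ2).abs measurable_const
  have hGmeas : MeasurableSet (Gset K μ1F μ2F μ1B μ2B (3 * (1 - δ) * η / δ) η) :=
    (((hSmeas μ1F μ2F _).compl.inter (hSmeas μ1B μ2B _)).union
      ((hSmeas μ1B μ2B _).compl.inter (hSmeas μ1F μ2F _)))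
  have hset : {z | |(fun z => |witness K (mix δ μ1F μ1B) (mix δ μ2F μ2B) z|) z| < 2 * (1 - δ) * η}
      = {z | |witness K (mix δ μ1F μ1B) (mix δ μ2F μ2B) z| < 2 * (1 - δ) * η} := by
    simp only [abs_abs]
  rw [Lambda, hset]
  have hle : ν {z | |witness K (mix δ μ1F μ1B) (mix δ μ2F μ2B) z| < 2 * (1 - δ) * η}
      ≤ ν (Gset K μ1F μ2F μ1B μ2B (3 * (1 - δ) * η / δ) η)ᶜ := measure_mono hsub
  rw [measure_compl hGmeas (measure_ne_top _ _), measure_univ] at hle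
  have := ENNReal.toReal_mono (by simp [ENNReal.sub_ne_top]) hle
  rw [ENNReal.toReal_sub_of_le prob_le_one (by simp), ENNReal.toReal_one] at this
  exact this
end
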